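/- For all integers n ≥ 2 and 0 ≤ i ≤ n−2, let κ_i denote the number of tuples (x_1,…,x_{n−1}, y_2,…,y_{n−1}) of nonnegative integers satisfying x_1 + (y_2 + y_3 + ⋯ + y_{n−1}) = n − 2 − i and x_d + (y_d + y_{d+1} + ⋯ + y_{n−1}) = n − 1 − d for each 2 ≤ d ≤ n−1. Then (n−1) · κ_i = (i+1) · binom(2n − 4 − i, n − 2). -/

import Mathlib

/-!
Write `m = n - 2` and `c = n - 2 - i`. The `x_d` are slack variables, so a solution is determined
by `y`, subject to the inequalities `y_0 + ⋯ + y_{m-1} ≤ c` and `y_k + ⋯ + y_{m-1} ≤ m - 1 - k`.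
Splitting off the first coordinate of `y` gives the recursion
`N(m + 1, c) = ∑_{u ≤ min c m} N(m, u)` for the number `N(m, c)` of such `y`, that is, the
ballot-number recurrence `N(m + 1, c + 1) = N(m + 1, c) + N(m, c + 1)`, from which the closed form
`(m + 1) N(m, c) = (m + 1 - c) binom(m + c, m)` follows by induction.
-/

open Finset

namespace Caracol

def slackEquiv {ι β : Type*} (f : β → ι → ℕ) (b : ι → ℕ) :
    {p : (ι → ℕ) × β // ∀ k, p.1 k + f p.2 k = b k} ≃ {y : β // ∀ k, f y k ≤ b k} where
  toFun p := ⟨p.1.2, fun k => p.2 k ▸ Nat.le_add_left _ _⟩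
  invFun y := ⟨(fun k => b k - f y k, y), fun k => Nat.sub_add_cancel (y.2 k)⟩
  left_inv p := Subtype.ext <| Prod.ext (funext fun k => by have := p.2 k; dsimp only; omega) rfl
  right_inv _ := rfl

def tailSum {m : ℕ} (y : Fin m → ℕ) (k : ℕ) : ℕ :=
  ∑ j ∈ univ.filter (fun j : Fin m => k ≤ (j : ℕ)), y j

lemma tailSum_zero {m : ℕ} (y : Fin m → ℕ) : tailSum y 0 = ∑ j, y j := by
  simp [tailSum]

lemma tailSum_cons_succ {m : ℕ} (a : ℕ) (z : Fin m → ℕ) (k : ℕ) :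
    tailSum (Fin.cons a z : Fin (m + 1) → ℕ) (k + 1) = tailSum z k := by
  simp [tailSum, sum_filter, Fin.sum_univ_succ]

lemma sum_filter_le_add_two_eq_tailSum {m : ℕ} (y : Fin m → ℕ) (d : ℕ) :
    ∑ j ∈ univ.filter (fun j : Fin m => d ≤ (j : ℕ) + 2), y j = tailSum y (d - 2) := by
  simp only [tailSum, Nat.sub_le_iff_le_add]

def staircase (m c : ℕ) : Set (Fin m → ℕ) :=
  {y | ∑ j, y j ≤ c ∧ ∀ k : Fin m, tailSum y k ≤ m - 1 - k}

lemma staircase_finite (m c : ℕ) : (staircase m c).Finite :=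
  (Set.Finite.pi' fun _ => Set.finite_Iic c).subset fun _ hy j =>
    (single_le_sum (fun _ _ => Nat.zero_le _) (mem_univ j)).trans hy.1

instance (m c : ℕ) : Finite (staircase m c) := (staircase_finite m c).to_subtype

lemma cons_mem_staircase_iff {m c a : ℕ} {z : Fin m → ℕ} :
    (Fin.cons a z : Fin (m + 1) → ℕ) ∈ staircase (m + 1) c ↔
      a ≤ min c m ∧ z ∈ staircase m (min c m - a) := by
  simp only [staircase, Set.mem_ofPred_eq, Fin.sum_cons, Fin.forall_fin_succ, Fin.val_zero,
    tailSum_zero, Fin.val_succ, tailSum_cons_succ]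
  constructor
  · rintro ⟨hc, hm, hz⟩
    exact ⟨by omega, by omega, fun k => by have := hz k; omega⟩
  · rintro ⟨ha, hz, hk⟩
    exact ⟨by omega, by omega, fun k => by have := hk k; omega⟩

def staircaseSuccEquiv (m c : ℕ) :
    staircase (m + 1) c ≃ Σ a : Fin (min c m + 1), staircase m (min c m - a) where
  toFun y :=
    have h := cons_mem_staircase_iff.mp ((Fin.cons_self_tail y.1).symm ▸ y.2)
    ⟨⟨y.1 0, Nat.lt_succ_of_le h.1⟩, ⟨Fin.tail y.1, h.2⟩⟩
  invFun az :=
    ⟨Fin.cons (az.1 : ℕ) az.2.1, cons_mem_staircase_iff.mpr ⟨Nat.le_of_lt_succ az.1.2, az.2.2⟩⟩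
  left_inv y := Subtype.ext (Fin.cons_self_tail y.1)
  right_inv _ := rfl

lemma card_staircase_succ (m c : ℕ) :
    Nat.card (staircase (m + 1) c) = ∑ u ∈ range (min c m + 1), Nat.card (staircase m u) := by
  rw [Nat.card_congr (staircaseSuccEquiv m c), Nat.card_sigma,
    Fin.sum_univ_eq_sum_range (fun a => Nat.card (staircase m (min c m - a))),
    ← sum_range_reflect]
  exact sum_congr rfl fun u hu => by
    rw [add_tsub_cancel_right, Nat.sub_sub_self (Nat.le_of_lt_succ (mem_range.mp hu))]

lemma card_staircase_zero_left (c : ℕ) : Nat.card (staircase 0 c) = 1 := by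
  have : staircase 0 c = Set.univ := by ext y; simp [staircase]
  rw [this, Nat.card_univ, Nat.card_unique]

lemma card_staircase_zero_right (m : ℕ) : Nat.card (staircase m 0) = 1 := by
  induction m with
  | zero => exact card_staircase_zero_left 0
  | succ m ih => rw [card_staircase_succ, Nat.zero_min, zero_add, sum_range_one, ih]

lemma card_staircase_succ_succ {m c : ℕ} (h : c + 1 ≤ m) :
    Nat.card (staircase (m + 1) (c + 1)) =
      Nat.card (staircase (m + 1) c) + Nat.card (staircase m (c + 1)) := by
  rw [card_staircase_succ, card_staircase_succ, min_eq_left h, min_eq_left (by omega),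
    sum_range_succ]

lemma card_staircase_succ_self (m : ℕ) :
    Nat.card (staircase (m + 1) (m + 1)) = Nat.card (staircase (m + 1) m) := by
  rw [card_staircase_succ, card_staircase_succ, min_self, min_eq_right (Nat.le_succ m)]

theorem succ_mul_card_staircase {m c : ℕ} (h : c ≤ m) :
    (m + 1) * Nat.card (staircase m c) = (m + 1 - c) * (m + c).choose m := by
  induction m generalizing c with
  | zero => obtain rfl : c = 0 := by omega
            rw [card_staircase_zero_left, Nat.choose_self]
  | succ m ihm =>
    induction c with
    | zero => rw [card_staircase_zero_right, Nat.choose_self, Nat.sub_zero]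
    | succ c ihc =>
      obtain hc | rfl : c + 1 ≤ m ∨ c = m := by omega
      · have hA := ihc (by omega)
        have hB := ihm hc
        have hratio := Nat.choose_succ_right_eq (m + c + 1) m
        have hpascal := Nat.choose_succ_succ' (m + c + 1) m
        rw [show m + 1 + c = m + c + 1 by ring] at hA
        rw [show m + (c + 1) = m + c + 1 by ring] at hB
        rw [show m + c + 1 - m = c + 1 by omega] at hratio
        rw [card_staircase_succ_succ hc, show m + 1 + (c + 1) = m + c + 1 + 1 by ring, hpascal]
        refine Nat.eq_of_mul_eq_mul_left (Nat.succ_pos m) ?_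
        zify [h, (by omega : c ≤ m + 1 + 1), (by omega : c + 1 ≤ m + 1 + 1)] at hA hB hratio ⊢
        linear_combination (↑m + 1 : ℤ) * hA + (↑m + 2 : ℤ) * hB + hratio
      · have hA := ihc (by omega)
        rw [show c + 1 + 1 - c = 2 by omega, show c + 1 + c = 2 * c + 1 by ring,
          Nat.choose_symm_half] at hA
        rw [card_staircase_succ_self, show c + 1 + 1 - (c + 1) = 1 by omega,
          show c + 1 + (c + 1) = 2 * c + 1 + 1 by ring, Nat.choose_succ_succ',
          Nat.choose_symm_half]
        omega

lemma caracol_equations_iff {m : ℕ} (x : Fin (m + 1) → ℕ) (y : Fin m → ℕ) :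
    (∀ d : ℕ, ∀ _h1 : 2 ≤ d, ∀ _h2 : d ≤ m + 1,
        x ⟨d - 1, by omega⟩ + ∑ j ∈ univ.filter (fun j : Fin m => d ≤ (j : ℕ) + 2), y j
          = m + 1 - d) ↔
      ∀ k : Fin m, x k.succ + tailSum y k = m - 1 - k := by
  simp only [sum_filter_le_add_two_eq_tailSum]
  constructor
  · intro h k
    rw [show m - 1 - k = m + 1 - (k + 2) by omega]
    exact h (k + 2) (by omega) (by omega)
  · intro h d h1 h2
    obtain ⟨k, rfl⟩ : ∃ k, d = k + 2 := ⟨d - 2, by omega⟩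
    rw [show m + 1 - (k + 2) = m - 1 - k by omega]
    exact h ⟨k, by omega⟩

lemma card_caracol_eq_card_staircase (m c : ℕ) :
    Nat.card {p : (Fin (m + 1) → ℕ) × (Fin m → ℕ) //
      (p.1 ⟨0, by omega⟩ + ∑ j, p.2 j = c) ∧
      (∀ d : ℕ, ∀ _h1 : 2 ≤ d, ∀ _h2 : d ≤ m + 1,
        p.1 ⟨d - 1, by omega⟩ +
          ∑ j ∈ univ.filter (fun j : Fin m => d ≤ (j : ℕ) + 2), p.2 j
        = m + 1 - d)} = Nat.card (staircase m c) := by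
  let load : (Fin m → ℕ) → Fin (m + 1) → ℕ := fun y => Fin.cons (∑ j, y j) (tailSum y ·)
  let bound : Fin (m + 1) → ℕ := Fin.cons c fun k : Fin m => m - 1 - k
  refine Nat.card_congr <| (Equiv.subtypeEquivRight fun p => ?_).trans <|
    (slackEquiv load bound).trans (Equiv.subtypeEquivRight fun y => ?_)
  · rw [caracol_equations_iff, Fin.forall_fin_succ]
    rfl
  · rw [Fin.forall_fin_succ]
    rfl

end Caracol

open Caracol in
theorem stmt8 (n i : ℕ) (hn : 2 ≤ n) (hi : i ≤ n - 2) :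
    (n - 1) * Nat.card {p : (Fin (n - 1) → ℕ) × (Fin (n - 2) → ℕ) //
      (p.1 ⟨0, by omega⟩ + ∑ j, p.2 j = n - 2 - i) ∧
      (∀ d : ℕ, ∀ _h1 : 2 ≤ d, ∀ _h2 : d ≤ n - 1,
        p.1 ⟨d - 1, by omega⟩ +
          ∑ j ∈ Finset.univ.filter (fun j : Fin (n - 2) => d ≤ (j : ℕ) + 2), p.2 j
        = n - 1 - d)} =
    (i + 1) * Nat.choose (2 * n - 4 - i) (n - 2) := by
  obtain ⟨m, rfl⟩ : ∃ m, n = m + 2 := ⟨n - 2, by omega⟩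
  calc _ = (m + 1) * Nat.card (staircase m (m - i)) :=
        congrArg ((m + 1) * ·) (card_caracol_eq_card_staircase m (m - i))
    _ = (m + 1 - (m - i)) * (m + (m - i)).choose m := succ_mul_card_staircase (Nat.sub_le m i)
    _ = _ := by
      rw [show m + 1 - (m - i) = i + 1 by omega, show m + (m - i) = 2 * (m + 2) - 4 - i by omega]
      rfl
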